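/- Let Λ₀ ⊆ C̄ be a countable set of states such that λ ∈ Λ₀, s ∈ S and λ + s ∈ C̄ imply λ + s ∈ Λ₀, and fix λ₀ ∈ Λ₀ such that every λ ∈ Λ₀ can be reached from λ₀ by a finite path λ₀ = π_0, π_1, …, π_n = λ with all π_k ∈ C̄ and all increments π_{k+1} − π_k ∈ S. Assume: (i) there exist κ₁, κ₂ > 0 and V : Λ₀ → ℝ_{>0} with ψ_n(λ) · n^{κ₂} → κ₁ V(λ) as n → ∞ for every λ ∈ Λ₀; (ii) there is a function D₀ : Λ₀ → ℝ_{>0} with D₀(λ₀) = 1, harmonic for the killed kernel (D₀(λ) = ∑_{s ∈ S, λ+s ∈ C̄} ν({s}) D₀(λ+s) for all λ ∈ Λ₀), and satisfying ψ_n(λ) ≤ D₀(λ) ψ_n(λ₀) for all λ ∈ Λ₀ and n ≥ 1. Then for every λ ∈ Λ₀, ψ_n(λ)/ψ_n(λ₀) → D₀(λ), and for every λ, Λ ∈ Λ₀ with Λ − λ ∈ S, the conditioned transition probabilities converge: ℙ(λ + X_1 = Λ and τ_λ > n)/ℙ(τ_λ > n) → ν({Λ − λ}) · D₀(Λ)/D₀(λ)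 as n → ∞. -/

import Mathlib

/-!
Conditioning on the first step gives `ψ_{n+1}(λ) = ∑ₛ ν{s} 1_C(λ+s) ψ_n(λ+s)`. Multiplying by
`n^κ₂` and letting `n → ∞` shows that the limit `L = κ₁ V` is harmonic for the killed kernel on
`Λ₀`, while the domination hypothesis passes to the limit as `L ≤ D₀ · L(λ₀)`. Hence
`D₀ · L(λ₀) - L` is a nonnegative harmonic function vanishing at `λ₀`; since every `ν{s}` is
positive, it vanishes at each step of a path from `λ₀`, so `L = D₀ · L(λ₀)` on `Λ₀`. Both limits
are then quotients of the asymptotics `ψ_n ~ κ₁ V n^{-κ₂}`, using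
`ℙ(λ + X₁ = Λ, τ_λ > n + 1) = ν{Λ - λ} ψ_n(Λ)`.
-/

open MeasureTheory ProbabilityTheory Filter Finset Measure Topology

theorem AddSubmonoid.countable_closure_finset {M : Type*} [AddCommMonoid M] (S : Finset M) :
    (AddSubmonoid.closure (S : Set M) : Set M).Countable := by
  refine (Set.countable_range fun f : S → ℕ => ∑ a : S, f a • (a : M)).mono fun x hx => ?_
  obtain ⟨f, -, rfl⟩ := AddSubmonoid.mem_closure_finset.1 hx
  exact ⟨fun a => f a, Finset.sum_coe_sort S fun a => f a • a⟩

theorem nullMeasurableSet_preimage_of_ae_mem_countable {α β : Type*} [MeasurableSpace α]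
    [MeasurableSpace β] [MeasurableSingletonClass β] {μ : Measure α} {f : α → β}
    (hf : Measurable f) {T : Set β} (hT : T.Countable) (hfT : ∀ᵐ a ∂μ, f a ∈ T) (B : Set β) :
    NullMeasurableSet (f ⁻¹' B) μ := by
  refine ⟨f ⁻¹' (B ∩ T), hf (hT.mono Set.inter_subset_right).measurableSet, ?_⟩
  filter_upwards [hfT] with a ha
  exact propext ⟨fun hB => ⟨hB, ha⟩, And.left⟩

theorem ProbabilityTheory.iIndepFun.indepFun_head_tail {Ω β : Type*} [MeasurableSpace Ω]
    [MeasurableSpace β] {P : Measure Ω} {X : ℕ → Ω → β} (hX : iIndepFun X P)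
    (hXmeas : ∀ n, Measurable (X n)) : IndepFun (X 0) (fun ω n => X (n + 1) ω) P := by
  rw [IndepFun_iff_Indep]
  have h := indep_iSup_of_disjoint (fun n => (hXmeas n).comap_le) hX.iIndep
    (S := {0}) (T := {n | n ≠ 0}) (by simp)
  refine indep_of_indep_of_le_right (indep_of_indep_of_le_left h ?_) ?_
  · exact le_iSup₂ (f := fun n (_ : n ∈ ({0} : Set ℕ)) => MeasurableSpace.comap (X n) _) 0 rfl
  · rw [MeasurableSpace.pi, MeasurableSpace.comap_iSup]
    refine iSup_le fun n => ?_
    rw [MeasurableSpace.comap_comp]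
    exact le_iSup₂ (f := fun n (_ : n ∈ {n : ℕ | n ≠ 0}) => MeasurableSpace.comap (X n) _)
      (n + 1) n.succ_ne_zero

theorem ProbabilityTheory.iIndepFun.measurePreserving_infinitePi {Ω E : Type*}
    [MeasurableSpace Ω] [MeasurableSpace E] {P : Measure Ω} {ν : Measure E}
    [IsProbabilityMeasure ν] {X : ℕ → Ω → E} (hX : iIndepFun X P)
    (hXmeas : ∀ n, Measurable (X n)) (hXdist : ∀ n, P.map (X n) = ν) :
    MeasurePreserving (fun ω n => X n ω) P (infinitePi fun _ => ν) := by
  refine ⟨measurable_pi_lambda _ hXmeas, ?_⟩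
  rw [hX.map_fun_eq_infinitePi_map hXmeas]
  simp_rw [hXdist]

section SequenceSpace

variable {E : Type*} [MeasurableSpace E] (ν : Measure E) [IsProbabilityMeasure ν]

theorem measurePreserving_head_tail :
    MeasurePreserving (fun w : ℕ → E => (w 0, fun n => w (n + 1)))
      (infinitePi fun _ => ν) (ν.prod (infinitePi fun _ => ν)) := by
  have hindep := (iIndepFun_infinitePi (P := fun _ : ℕ => ν) (X := fun _ x => x)
    fun _ => measurable_id).indepFun_head_tail fun n => measurable_pi_apply n
  refine ⟨by fun_prop, ?_⟩
  rw [(indepFun_iff_map_prod_eq_prod_map_map (measurable_pi_apply 0).aemeasurable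
      (by fun_prop : Measurable fun (w : ℕ → E) n => w (n + 1)).aemeasurable).1 hindep,
    infinitePi_map_eval, map_infinitePi_infinitePi_of_inj Nat.succ_injective]

variable [MeasurableSingletonClass E] {S : Finset E}

theorem ae_forall_mem_of_measure_eq_one (hνS : ν S = 1) :
    ∀ᵐ w ∂(infinitePi fun _ : ℕ => ν), ∀ n, w n ∈ S := by
  have hS : ∀ᵐ y ∂ν, y ∈ (S : Set E) :=
    mem_ae_iff.2 ((prob_compl_eq_zero_iff S.finite_toSet.measurableSet).2 hνS)
  exact ae_all_iff.2 fun n =>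
    (measurePreserving_eval_infinitePi (fun _ => ν) n).quasiMeasurePreserving.ae hS

theorem measure_eq_sum_head_inter (hνS : ν S = 1) {A : Set (ℕ → E)}
    (hA : NullMeasurableSet A (infinitePi fun _ : ℕ => ν)) :
    infinitePi (fun _ : ℕ => ν) A
      = ∑ s ∈ S, infinitePi (fun _ : ℕ => ν) ({w | w 0 = s} ∩ A) := by
  have hhead : ∀ᵐ w ∂(infinitePi fun _ : ℕ => ν), w 0 ∈ S :=
    (ae_forall_mem_of_measure_eq_one ν hνS).mono fun w hw => hw 0
  have hunion : A ∩ {w | w 0 ∈ S} = ⋃ s ∈ S, {w | w 0 = s} ∩ A := by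
    ext w
    simp [and_comm]
  rw [← measure_inter_conull (s := A) (t := {w | w 0 ∈ S}) (ae_iff.1 hhead), hunion,
    measure_biUnion_finset₀]
  · intro s _ t _ hst
    exact Disjoint.aedisjoint (Set.disjoint_left.2 fun w hs ht => hst (hs.1.symm.trans ht.1))
  · intro s _
    have hs : MeasurableSet {w : ℕ → E | w 0 = s} :=
      (measurableSet_singleton s).preimage (measurable_pi_apply 0)
    exact hs.nullMeasurableSet.inter hA

end SequenceSpace

section Survival

variable {E : Type*} [AddCommMonoid E]

def survivalSet (C : Set E) (x : E) (n : ℕ) : Set (ℕ → E) :=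
  {w | ∀ k, 1 ≤ k → k ≤ n → x + ∑ j ∈ range k, w j ∈ C}

theorem survivalSet_succ (C : Set E) (x : E) (n : ℕ) :
    survivalSet C x (n + 1) =
      {w | x + w 0 ∈ C ∧ (fun j => w (j + 1)) ∈ survivalSet C (x + w 0) n} := by
  have hsum : ∀ (w : ℕ → E) k, x + ∑ j ∈ range (k + 1), w j
      = x + w 0 + ∑ j ∈ range k, w (j + 1) := fun w k => by
    rw [sum_range_succ']; abel
  ext w
  constructor
  · intro h
    refine ⟨by simpa using h 1 le_rfl (by omega), fun k hk hkn => ?_⟩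
    rw [← hsum]
    exact h (k + 1) (by omega) (by omega)
  · rintro ⟨h0, h⟩ k hk hkn
    obtain ⟨k, rfl⟩ := Nat.exists_eq_add_of_le' hk
    rcases k.eq_zero_or_pos with rfl | hk'
    · simpa using h0
    · rw [hsum]
      exact h k hk' (by omega)

variable [MeasurableSpace E] (ν : Measure E) [IsProbabilityMeasure ν]

/-- `ψ_n(x)`, computed on path space under the law of the i.i.d. increments. -/
noncomputable def survivalProb (C : Set E) (n : ℕ) (x : E) : ℝ :=
  (infinitePi fun _ : ℕ => ν).real (survivalSet C x n)

variable [MeasurableSingletonClass E] [MeasurableAdd₂ E] {S : Finset E}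

/-- `C` is arbitrary, so survival events need not be measurable; they are null-measurable
because almost surely every partial sum lies in the countable monoid generated by `S`. -/
theorem nullMeasurableSet_survivalSet (hνS : ν S = 1) (C : Set E) (x : E) (n : ℕ) :
    NullMeasurableSet (survivalSet C x n) (infinitePi fun _ : ℕ => ν) := by
  have hsums : ∀ k, ∀ᵐ w ∂(infinitePi fun _ : ℕ => ν),
      ∑ j ∈ range k, w j ∈ AddSubmonoid.closure (S : Set E) := fun k => by
    filter_upwards [ae_forall_mem_of_measure_eq_one ν hνS] with w hw
    exact sum_mem fun j _ => AddSubmonoid.subset_closure (hw j)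
  have hset : survivalSet C x n =
      ⋂ k ∈ Set.Icc 1 n, (fun w : ℕ → E => ∑ j ∈ range k, w j) ⁻¹' {v | x + v ∈ C} := by
    ext w
    simp [survivalSet]
  rw [hset]
  exact .biInter (Set.to_countable _) fun k _ =>
    nullMeasurableSet_preimage_of_ae_mem_countable (by fun_prop)
      (AddSubmonoid.countable_closure_finset S) (hsums k) _

theorem measure_head_inter_survivalSet_succ (hνS : ν S = 1) {C : Set E} {x s : E}
    (hs : x + s ∈ C) (n : ℕ) :
    infinitePi (fun _ : ℕ => ν) ({w | w 0 = s} ∩ survivalSet C x (n + 1))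
      = ν {s} * infinitePi (fun _ : ℕ => ν) (survivalSet C (x + s) n) := by
  have hset : {w | w 0 = s} ∩ survivalSet C x (n + 1)
      = (fun w : ℕ → E => (w 0, fun j => w (j + 1))) ⁻¹' ({s} ×ˢ survivalSet C (x + s) n) := by
    ext w
    rw [survivalSet_succ]
    constructor
    · rintro ⟨rfl, -, h⟩
      exact ⟨rfl, h⟩
    · rintro ⟨h0, h⟩
      rw [Set.mem_singleton_iff] at h0
      subst h0
      exact ⟨rfl, hs, h⟩
  rw [hset, (measurePreserving_head_tail ν).measure_preimage
    ((measurableSet_singleton s).nullMeasurableSet.prod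
      (nullMeasurableSet_survivalSet ν hνS C _ n)), prod_prod]

theorem survivalProb_succ (hνS : ν S = 1) (C : Set E) (n : ℕ) (x : E) :
    survivalProb ν C (n + 1) x
      = ∑ s ∈ S, ν.real {s} * C.indicator (survivalProb ν C n) (x + s) := by
  rw [survivalProb, measureReal_def, measure_eq_sum_head_inter ν hνS
    (nullMeasurableSet_survivalSet ν hνS C x (n + 1)),
    ENNReal.toReal_sum fun _ _ => measure_ne_top _ _]
  refine sum_congr rfl fun s _ => ?_
  by_cases hs : x + s ∈ C
  · rw [measure_head_inter_survivalSet_succ ν hνS hs, ENNReal.toReal_mul,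
      Set.indicator_of_mem hs]
    rfl
  · have hempty : {w | w 0 = s} ∩ survivalSet C x (n + 1) = ∅ := by
      rw [survivalSet_succ, Set.eq_empty_iff_forall_notMem]
      rintro w ⟨rfl, h, -⟩
      exact hs h
    rw [hempty, Set.indicator_of_notMem hs, measure_empty, ENNReal.toReal_zero, mul_zero]

variable {Ω : Type*} [MeasurableSpace Ω] {P : Measure Ω} {X : ℕ → Ω → E}

theorem measureReal_survival_eq (hX : MeasurePreserving (fun ω n => X n ω) P
    (infinitePi fun _ => ν)) (hνS : ν S = 1) (C : Set E) (n : ℕ) (x : E) :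
    (P {ω | ∀ k, 1 ≤ k → k ≤ n → x + ∑ j ∈ range k, X j ω ∈ C}).toReal
      = survivalProb ν C n x :=
  hX.measureReal_preimage (nullMeasurableSet_survivalSet ν hνS C x n)

end Survival

theorem measure_step_inter_survival_succ {Ω E : Type*} [MeasurableSpace Ω] [MeasurableSpace E]
    [AddCommGroup E] [MeasurableSingletonClass E] [MeasurableAdd₂ E] {P : Measure Ω}
    {ν : Measure E} [IsProbabilityMeasure ν] {S : Finset E} {X : ℕ → Ω → E}
    (hX : MeasurePreserving (fun ω n => X n ω) P (infinitePi fun _ => ν)) (hνS : ν S = 1)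
    {C : Set E} {x y : E} (hy : y ∈ C) (n : ℕ) :
    P ({ω | x + X 0 ω = y} ∩ {ω | ∀ k, 1 ≤ k → k ≤ n + 1 → x + ∑ j ∈ range k, X j ω ∈ C})
      = ν {y - x} * P {ω | ∀ k, 1 ≤ k → k ≤ n → y + ∑ j ∈ range k, X j ω ∈ C} := by
  have hstep : x + (y - x) ∈ C := by rwa [add_sub_cancel]
  have hhead : MeasurableSet {w : ℕ → E | w 0 = y - x} :=
    (measurableSet_singleton _).preimage (measurable_pi_apply 0)
  calc _ = infinitePi (fun _ => ν) ({w | w 0 = y - x} ∩ survivalSet C x (n + 1)) := by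
        simp_rw [← eq_sub_iff_add_eq']
        exact hX.measure_preimage (hhead.nullMeasurableSet.inter
          (nullMeasurableSet_survivalSet ν hνS C x _))
    _ = ν {y - x} * infinitePi (fun _ => ν) (survivalSet C y n) := by
        rw [measure_head_inter_survivalSet_succ ν hνS hstep, add_sub_cancel]
    _ = _ := by rw [← hX.measure_preimage (nullMeasurableSet_survivalSet ν hνS C y n)]; rfl

theorem tendsto_succ_mul_rpow {a : ℕ → ℝ} {κ L : ℝ}
    (h : Tendsto (fun n : ℕ => a n * (n : ℝ) ^ κ) atTop (𝓝 L)) :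
    Tendsto (fun n : ℕ => a (n + 1) * (n : ℝ) ^ κ) atTop (𝓝 L) := by
  have hshift : Tendsto (fun n : ℕ => a (n + 1) * ((n : ℝ) + 1) ^ κ) atTop (𝓝 L) := by
    simpa using (tendsto_add_atTop_iff_nat 1).2 h
  have hratio : Tendsto (fun n : ℕ => ((n : ℝ) / (n + 1)) ^ κ) atTop (𝓝 1) := by
    simpa using (tendsto_natCast_div_add_atTop (1 : ℝ)).rpow_const (Or.inl one_ne_zero)
  refine (mul_one L ▸ hshift.mul hratio).congr fun n => ?_
  rw [Real.div_rpow (by positivity) (by positivity)]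
  field_simp

theorem tendsto_div_of_tendsto_mul {α : Type*} {l : Filter α} {a b g : α → ℝ} {L₁ L₂ : ℝ}
    (ha : Tendsto (fun n => a n * g n) l (𝓝 L₁)) (hb : Tendsto (fun n => b n * g n) l (𝓝 L₂))
    (hL₂ : L₂ ≠ 0) (hg : ∀ᶠ n in l, g n ≠ 0) :
    Tendsto (fun n => a n / b n) l (𝓝 (L₁ / L₂)) :=
  (ha.div hb hL₂).congr' (hg.mono fun _ hn => mul_div_mul_right _ _ hn)

section Harmonic

variable {E : Type*} [AddCommGroup E] (p : E → ℝ) (S : Finset E) (C Λ : Set E)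

def IsKilledHarmonicOn (h : E → ℝ) : Prop :=
  ∀ x ∈ Λ, h x = ∑ s ∈ S, p s * C.indicator h (x + s)

variable {p S C Λ}

theorem IsKilledHarmonicOn.sub {f g : E → ℝ} (hf : IsKilledHarmonicOn p S C Λ f)
    (hg : IsKilledHarmonicOn p S C Λ g) : IsKilledHarmonicOn p S C Λ (f - g) := by
  intro x hx
  rw [Pi.sub_apply, hf x hx, hg x hx, ← sum_sub_distrib]
  simp only [Set.indicator_sub', Pi.sub_apply, mul_sub]

theorem IsKilledHarmonicOn.mul_const {f : E → ℝ} (hf : IsKilledHarmonicOn p S C Λ f) (c : ℝ) :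
    IsKilledHarmonicOn p S C Λ (fun x => f x * c) := by
  intro x hx
  beta_reduce
  rw [hf x hx, sum_mul]
  refine sum_congr rfl fun s _ => ?_
  rw [Set.indicator_mul_const, mul_assoc]

theorem IsKilledHarmonicOn.eq_zero_of_step {h : E → ℝ} (hh : IsKilledHarmonicOn p S C Λ h)
    (hp : ∀ s ∈ S, 0 < p s) (hΛ : ∀ x ∈ Λ, ∀ s ∈ S, x + s ∈ C → x + s ∈ Λ)
    (hnonneg : ∀ x ∈ Λ, 0 ≤ h x) {x s : E} (hx : x ∈ Λ) (hx0 : h x = 0) (hs : s ∈ S)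
    (hxs : x + s ∈ C) : h (x + s) = 0 := by
  have hterm : ∀ t ∈ S, 0 ≤ p t * C.indicator h (x + t) := fun t ht => by
    refine mul_nonneg (hp t ht).le ?_
    by_cases hxt : x + t ∈ C
    · rw [Set.indicator_of_mem hxt]
      exact hnonneg _ (hΛ x hx t ht hxt)
    · rw [Set.indicator_of_notMem hxt]
  have hzero := (sum_eq_zero_iff_of_nonneg hterm).1 (hx0 ▸ (hh x hx).symm) s hs
  rwa [Set.indicator_of_mem hxs, mul_eq_zero, or_iff_right (hp s hs).ne'] at hzero

theorem IsKilledHarmonicOn.eq_zero_of_path {h : E → ℝ} (hh : IsKilledHarmonicOn p S C Λ h)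
    (hp : ∀ s ∈ S, 0 < p s) (hΛ : ∀ x ∈ Λ, ∀ s ∈ S, x + s ∈ C → x + s ∈ Λ)
    (hnonneg : ∀ x ∈ Λ, 0 ≤ h x) {π : ℕ → E} {n : ℕ} (h0 : π 0 ∈ Λ)
    (hz : h (π 0) = 0) (hC : ∀ k ≤ n, π k ∈ C) (hS : ∀ k < n, π (k + 1) - π k ∈ S) :
    h (π n) = 0 := by
  suffices ∀ k ≤ n, π k ∈ Λ ∧ h (π k) = 0 from (this n le_rfl).2
  intro k
  induction k with
  | zero => exact fun _ => ⟨h0, hz⟩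
  | succ k ih =>
    intro hk
    obtain ⟨hkΛ, hk0⟩ := ih (by omega)
    have hstep : π k + (π (k + 1) - π k) = π (k + 1) := add_sub_cancel _ _
    have hkC : π k + (π (k + 1) - π k) ∈ C := hstep.symm ▸ hC (k + 1) hk
    rw [← hstep]
    exact ⟨hΛ _ hkΛ _ (hS k (by omega)) hkC,
      hh.eq_zero_of_step hp hΛ hnonneg hkΛ hk0 (hS k (by omega)) hkC⟩

theorem IsKilledHarmonicOn.eq_of_le_of_path {f g : E → ℝ} (hf : IsKilledHarmonicOn p S C Λ f)
    (hg : IsKilledHarmonicOn p S C Λ g) (hp : ∀ s ∈ S, 0 < p s)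
    (hΛ : ∀ x ∈ Λ, ∀ s ∈ S, x + s ∈ C → x + s ∈ Λ) (hle : ∀ x ∈ Λ, g x ≤ f x) {π : ℕ → E}
    {n : ℕ} (h0 : π 0 ∈ Λ) (heq : f (π 0) = g (π 0)) (hC : ∀ k ≤ n, π k ∈ C)
    (hS : ∀ k < n, π (k + 1) - π k ∈ S) : f (π n) = g (π n) :=
  sub_eq_zero.1 <| (hf.sub hg).eq_zero_of_path hp hΛ (fun x hx => sub_nonneg.2 (hle x hx)) h0
    (sub_eq_zero.2 heq) hC hS

end Harmonic

theorem isKilledHarmonicOn_of_tendsto {E : Type*} [AddCommGroup E] {p : E → ℝ} {S : Finset E}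
    {C Λ : Set E} {ψ : ℕ → E → ℝ} {L : E → ℝ} {κ : ℝ}
    (hΛ : ∀ x ∈ Λ, ∀ s ∈ S, x + s ∈ C → x + s ∈ Λ)
    (hψ : ∀ x ∈ Λ, ∀ n, ψ (n + 1) x = ∑ s ∈ S, p s * C.indicator (ψ n) (x + s))
    (hlim : ∀ x ∈ Λ, Tendsto (fun n : ℕ => ψ n x * (n : ℝ) ^ κ) atTop (𝓝 (L x))) :
    IsKilledHarmonicOn p S C Λ L := by
  intro x hx
  refine tendsto_nhds_unique (tendsto_succ_mul_rpow (hlim x hx)) ?_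
  simp_rw [hψ x hx, sum_mul, mul_assoc]
  refine tendsto_finsetSum S fun s hs => (Tendsto.const_mul (p s) ?_)
  by_cases hxs : x + s ∈ C
  · simp only [Set.indicator_of_mem hxs]
    exact hlim _ (hΛ x hx s hs hxs)
  · simp only [Set.indicator_of_notMem hxs, zero_mul]
    exact tendsto_const_nhds

theorem stmt_9_general
    (D : ℕ)
    (S : Finset (Fin D → ℝ))
    (ν : Measure (Fin D → ℝ)) [IsProbabilityMeasure ν]
    (hνpos : ∀ s ∈ S, 0 < ν {s}) (hνS : ν (S : Set (Fin D → ℝ)) = 1)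
    {Ω : Type*} [MeasurableSpace Ω] (P : Measure Ω)
    (X : ℕ → Ω → (Fin D → ℝ)) (hXmeas : ∀ k, Measurable (X k))
    (hXindep : iIndepFun X P)
    (hXdist : ∀ k, Measure.map (X k) P = ν)
    (C : Set (Fin D → ℝ))
    (Λ₀ : Set (Fin D → ℝ)) (hΛ₀sub : Λ₀ ⊆ C)
    (hΛ₀closed : ∀ lam ∈ Λ₀, ∀ s ∈ S, lam + s ∈ C → lam + s ∈ Λ₀)
    (lam₀ : Fin D → ℝ) (hlam₀ : lam₀ ∈ Λ₀)
    (hreach : ∀ lam ∈ Λ₀, ∃ n : ℕ, ∃ π : ℕ → (Fin D → ℝ),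
        π 0 = lam₀ ∧ π n = lam ∧ (∀ k ≤ n, π k ∈ C) ∧ ∀ k < n, π (k + 1) - π k ∈ S)
    (κ₁ κ₂ : ℝ) (hκ₁ : 0 < κ₁)
    (V : (Fin D → ℝ) → ℝ) (hV : ∀ lam ∈ Λ₀, 0 < V lam)
    (hasymp : ∀ lam ∈ Λ₀, Tendsto (fun n : ℕ =>
        (P {ω | ∀ k, 1 ≤ k → k ≤ n →
            lam + (∑ j ∈ Finset.range k, X j ω) ∈ C}).toReal * (n : ℝ) ^ κ₂)
        atTop (nhds (κ₁ * V lam)))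
    (D₀ : (Fin D → ℝ) → ℝ)
    (hD₀base : D₀ lam₀ = 1)
    (hD₀harm : ∀ lam ∈ Λ₀,
        D₀ lam = ∑ s ∈ S, (ν {s}).toReal * C.indicator D₀ (lam + s))
    (hD₀dom : ∀ lam ∈ Λ₀, ∀ n : ℕ, 1 ≤ n →
        (P {ω | ∀ k, 1 ≤ k → k ≤ n →
            lam + (∑ j ∈ Finset.range k, X j ω) ∈ C}).toReal
          ≤ D₀ lam * (P {ω | ∀ k, 1 ≤ k → k ≤ n →
              lam₀ + (∑ j ∈ Finset.range k, X j ω) ∈ C}).toReal) :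
    (∀ lam ∈ Λ₀, Tendsto (fun n : ℕ =>
        (P {ω | ∀ k, 1 ≤ k → k ≤ n →
            lam + (∑ j ∈ Finset.range k, X j ω) ∈ C}).toReal
          / (P {ω | ∀ k, 1 ≤ k → k ≤ n →
              lam₀ + (∑ j ∈ Finset.range k, X j ω) ∈ C}).toReal)
        atTop (nhds (D₀ lam)))
    ∧ ∀ lam ∈ Λ₀, ∀ Lam ∈ Λ₀, Lam - lam ∈ S →
        Tendsto (fun n : ℕ =>
          (P ({ω | lam + X 0 ω = Lam}
              ∩ {ω | ∀ k, 1 ≤ k → k ≤ n →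
                  lam + (∑ j ∈ Finset.range k, X j ω) ∈ C})).toReal
            / (P {ω | ∀ k, 1 ≤ k → k ≤ n →
                lam + (∑ j ∈ Finset.range k, X j ω) ∈ C}).toReal)
          atTop (nhds ((ν {Lam - lam}).toReal * D₀ Lam / D₀ lam)) := by
  have hX := hXindep.measurePreserving_infinitePi hXmeas hXdist
  simp only [measureReal_survival_eq ν hX hνS] at hasymp hD₀dom ⊢
  have hLpos : ∀ x ∈ Λ₀, 0 < κ₁ * V x := fun x hx => mul_pos hκ₁ (hV x hx)
  have hpow : ∀ᶠ n : ℕ in atTop, (n : ℝ) ^ κ₂ ≠ 0 :=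
    (eventually_ge_atTop 1).mono fun n hn => (Real.rpow_pos_of_pos (by exact_mod_cast hn) _).ne'
  have hLharm : IsKilledHarmonicOn (fun s => ν.real {s}) S C Λ₀ (fun x => κ₁ * V x) :=
    isKilledHarmonicOn_of_tendsto hΛ₀closed (fun x _ n => survivalProb_succ ν hνS C n x) hasymp
  have hLle : ∀ x ∈ Λ₀, κ₁ * V x ≤ D₀ x * (κ₁ * V lam₀) := fun x hx =>
    le_of_tendsto_of_tendsto (hasymp x hx) ((hasymp lam₀ hlam₀).const_mul _) <|
      (eventually_ge_atTop 1).mono fun n hn => by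
        simpa only [mul_assoc] using mul_le_mul_of_nonneg_right (hD₀dom x hx n hn) (by positivity)
  have hL : ∀ x ∈ Λ₀, κ₁ * V x = D₀ x * (κ₁ * V lam₀) := fun x hx => by
    obtain ⟨n, π, hπ0, rfl, hπC, hπS⟩ := hreach x hx
    subst hπ0
    refine ((IsKilledHarmonicOn.mul_const hD₀harm _).eq_of_le_of_path hLharm ?_ hΛ₀closed hLle hlam₀
      (by rw [hD₀base, one_mul]) hπC hπS).symm
    exact fun s hs => ENNReal.toReal_pos (hνpos s hs).ne' (measure_ne_top _ _)
  refine ⟨fun lam hlam => ?_, fun lam hlam Lam hLam _ => ?_⟩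
  · have hlim := tendsto_div_of_tendsto_mul (hasymp lam hlam) (hasymp lam₀ hlam₀)
      (hLpos lam₀ hlam₀).ne' hpow
    rwa [hL lam hlam, mul_div_cancel_right₀ _ (hLpos lam₀ hlam₀).ne'] at hlim
  · rw [← tendsto_add_atTop_iff_nat 1]
    simp only [measure_step_inter_survival_succ hX hνS (hΛ₀sub hLam), ENNReal.toReal_mul,
      measureReal_survival_eq ν hX hνS, mul_div_assoc]
    convert (tendsto_div_of_tendsto_mul (hasymp Lam hLam) (tendsto_succ_mul_rpow
      (hasymp lam hlam)) (hLpos lam hlam).ne' hpow).const_mul (ν {Lam - lam}).toReal using 2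
    rw [hL Lam hLam, hL lam hlam, mul_div_mul_right _ _ (hLpos lam₀ hlam₀).ne']

/-- under (i) the Denisov–Wachtel asymptotics `ψ_n(λ)·n^{κ₂} → κ₁ V(λ)` on a
countable step-closed set of states `Λ₀ ⊆ C̄` whose points are all reachable from `λ₀`
by paths staying in `C̄` with increments in `S`, and (ii) the existence of a positive
function `D₀` with `D₀(λ₀) = 1`, harmonic for the killed kernel and dominating in the
sense `ψ_n(λ) ≤ D₀(λ)·ψ_n(λ₀)`, one has `ψ_n(λ)/ψ_n(λ₀) → D₀(λ)`, and the conditioned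
transition probabilities converge:
`ℙ(λ + X₁ = Λ, τ_λ > n)/ℙ(τ_λ > n) → ν({Λ-λ})·D₀(Λ)/D₀(λ)`. -/
theorem stmt_9
    (D : ℕ) (hD : 1 ≤ D)
    (S : Finset (Fin D → ℝ)) (hSne : S.Nonempty)
    (ν : Measure (Fin D → ℝ)) [IsProbabilityMeasure ν]
    (hνpos : ∀ s ∈ S, 0 < ν {s}) (hνS : ν (S : Set (Fin D → ℝ)) = 1)
    {Ω : Type*} [MeasurableSpace Ω] (P : Measure Ω) [IsProbabilityMeasure P]
    (X : ℕ → Ω → (Fin D → ℝ)) (hXmeas : ∀ k, Measurable (X k))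
    (hXindep : iIndepFun X P)
    (hXdist : ∀ k, Measure.map (X k) P = ν)
    (C : Set (Fin D → ℝ)) (hCadd : ∀ x ∈ C, ∀ y ∈ C, x + y ∈ C)
    (Λ₀ : Set (Fin D → ℝ)) (hΛ₀sub : Λ₀ ⊆ C) (hΛ₀count : Λ₀.Countable)
    (hΛ₀closed : ∀ lam ∈ Λ₀, ∀ s ∈ S, lam + s ∈ C → lam + s ∈ Λ₀)
    (lam₀ : Fin D → ℝ) (hlam₀ : lam₀ ∈ Λ₀)
    (hreach : ∀ lam ∈ Λ₀, ∃ n : ℕ, ∃ π : ℕ → (Fin D → ℝ),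
        π 0 = lam₀ ∧ π n = lam ∧ (∀ k ≤ n, π k ∈ C) ∧ ∀ k < n, π (k + 1) - π k ∈ S)
    (κ₁ κ₂ : ℝ) (hκ₁ : 0 < κ₁) (hκ₂ : 0 < κ₂)
    (V : (Fin D → ℝ) → ℝ) (hV : ∀ lam ∈ Λ₀, 0 < V lam)
    (hasymp : ∀ lam ∈ Λ₀, Tendsto (fun n : ℕ =>
        (P {ω | ∀ k, 1 ≤ k → k ≤ n →
            lam + (∑ j ∈ Finset.range k, X j ω) ∈ C}).toReal * (n : ℝ) ^ κ₂)
        atTop (nhds (κ₁ * V lam)))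
    (D₀ : (Fin D → ℝ) → ℝ) (hD₀pos : ∀ lam ∈ Λ₀, 0 < D₀ lam)
    (hD₀base : D₀ lam₀ = 1)
    (hD₀harm : ∀ lam ∈ Λ₀,
        D₀ lam = ∑ s ∈ S, (ν {s}).toReal * C.indicator D₀ (lam + s))
    (hD₀dom : ∀ lam ∈ Λ₀, ∀ n : ℕ, 1 ≤ n →
        (P {ω | ∀ k, 1 ≤ k → k ≤ n →
            lam + (∑ j ∈ Finset.range k, X j ω) ∈ C}).toReal
          ≤ D₀ lam * (P {ω | ∀ k, 1 ≤ k → k ≤ n →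
              lam₀ + (∑ j ∈ Finset.range k, X j ω) ∈ C}).toReal) :
    (∀ lam ∈ Λ₀, Tendsto (fun n : ℕ =>
        (P {ω | ∀ k, 1 ≤ k → k ≤ n →
            lam + (∑ j ∈ Finset.range k, X j ω) ∈ C}).toReal
          / (P {ω | ∀ k, 1 ≤ k → k ≤ n →
              lam₀ + (∑ j ∈ Finset.range k, X j ω) ∈ C}).toReal)
        atTop (nhds (D₀ lam)))
    ∧ ∀ lam ∈ Λ₀, ∀ Lam ∈ Λ₀, Lam - lam ∈ S →
        Tendsto (fun n : ℕ =>
          (P ({ω | lam + X 0 ω = Lam}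
              ∩ {ω | ∀ k, 1 ≤ k → k ≤ n →
                  lam + (∑ j ∈ Finset.range k, X j ω) ∈ C})).toReal
            / (P {ω | ∀ k, 1 ≤ k → k ≤ n →
                lam + (∑ j ∈ Finset.range k, X j ω) ∈ C}).toReal)
          atTop (nhds ((ν {Lam - lam}).toReal * D₀ Lam / D₀ lam)) :=
  stmt_9_general D S ν hνpos hνS P X hXmeas hXindep hXdist C Λ₀ hΛ₀sub hΛ₀closed lam₀ hlam₀ hreach
    κ₁ κ₂ hκ₁ V hV hasymp D₀ hD₀base hD₀harm hD₀dom
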